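/- Suppose the dilution map Λ_{d;ρ̃,ω}(X) = ρ̃·Tr[XΦ_d] + ω·Tr[X(𝟙−Φ_d)] satisfies the δ-approximate non-entangling conditions ω ≤ (1+δ)σ₁ and (1/d)ρ̃ + ((d−1)/d)ω ≤ (1+δ)σ₂ for separable σ₁, σ₂. Then with d' = 2d and ω' = (1/d')ρ̃ + ((d'−1)/d')ω, the map Λ_{d';ρ̃,ω'} is δ-approximately dually non-entangling: there exist separable σ₁', σ₂' with ω' ≤ (1+δ)σ₁', (1/d')ρ̃ + ((d'−1)/d')ω' ≤ (1+δ)σ₂', and additionally ρ̃ ≤ (d'+1)ω'. -/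

import Mathlib

open Matrix BigOperators
open scoped Kronecker ComplexOrder

noncomputable section

abbrev BOp (d : ℕ) := Matrix (Fin d × Fin d) (Fin d × Fin d) ℂ

/-- Loewner order: `A ≤ B` iff `B - A` is positive semidefinite. -/
def loe {n : Type*} [Fintype n] (A B : Matrix n n ℂ) : Prop := (B - A).PosSemidef

/-- A density operator: positive semidefinite with unit trace. -/
def IsState {n : Type*} [Fintype n] [DecidableEq n] (ρ : Matrix n n ℂ) : Prop :=
  ρ.PosSemidef ∧ ρ.trace = 1

/-- Separable bipartite state (convex combination of product states). -/
def IsSep {a b : Type*} [Fintype a] [DecidableEq a] [Fintype b] [DecidableEq b]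
    (ρ : Matrix (a × b) (a × b) ℂ) : Prop :=
  ∃ (m : ℕ) (p : Fin m → ℝ) (A : Fin m → Matrix a a ℂ) (B : Fin m → Matrix b b ℂ),
    (∀ i, 0 ≤ p i) ∧ (∑ i, p i) = 1 ∧
    (∀ i, IsState (A i)) ∧ (∀ i, IsState (B i)) ∧
    ρ = ∑ i, ((p i : ℝ) : ℂ) • (A i ⊗ₖ B i)

/-- The cone generated by separable states. -/
def InSepCone {a b : Type*} [Fintype a] [DecidableEq a] [Fintype b] [DecidableEq b]
    (S : Matrix (a × b) (a × b) ℂ) : Prop :=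
  ∃ (c : ℝ) (σ : Matrix (a × b) (a × b) ℂ), 0 ≤ c ∧ IsSep σ ∧ S = ((c : ℝ) : ℂ) • σ

/-- Maximally entangled state `Φ_d` on `ℂ^d ⊗ ℂ^d`. -/
def PhiME (d : ℕ) : BOp d := fun p q => if p.1 = p.2 ∧ q.1 = q.2 then ((1 : ℂ) / d) else 0

/-- `τ_d = (𝟙 - Φ_d)/(d² - 1)`. -/
def tauME (d : ℕ) : BOp d := (((d : ℂ)^2 - 1))⁻¹ • (1 - PhiME d)

/-- Partial transpose on the second tensor factor. -/
def pt {a b : Type*} (A : Matrix (a × b) (a × b) ℂ) : Matrix (a × b) (a × b) ℂ :=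
  fun p q => A (p.1, q.2) (q.1, p.2)

/-- Total positive-semidefinite square root (junk value `0` off the PSD cone). -/
noncomputable def msqrt {n : Type*} [Fintype n] [DecidableEq n] (A : Matrix n n ℂ) :
    Matrix n n ℂ :=
  open scoped Classical in
  if h : A.PosSemidef then (h.1.eigenvectorUnitary : Matrix n n ℂ) *
    diagonal ((↑) ∘ (√·) ∘ h.1.eigenvalues) * (star (h.1.eigenvectorUnitary : Matrix n n ℂ)) else 0

/-- Trace norm `‖A‖₁ = Tr √(AᴴA)`. -/
noncomputable def traceNorm {n : Type*} [Fintype n] [DecidableEq n] (A : Matrix n n ℂ) : ℝ :=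
  (msqrt (Aᴴ * A)).trace.re

/-!
With `d' = 2d`, write `M = (1/d)ρ̃ + ((d-1)/d)ω`. Then `ω'` is the midpoint of `M` and `ω`, and
`(1/d')ρ̃ + ((d'-1)/d')ω'` is the mixture `(1 - 1/(4d))M + (1/(4d))ω`. Mixing the two given bounds
`M ≤ (1+δ)σ₂` and `ω ≤ (1+δ)σ₁` with the same weights, and using that separable states are closed
under convex combinations, gives both new bounds. Finally `(d'+1)ω' - ρ̃ = (1/d')ρ̃ + ((d'²-1)/d')ω`
is positive semidefinite.
-/

theorem IsSep.smul_add_smul {a b : Type*} [Fintype a] [DecidableEq a] [Fintype b]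
    [DecidableEq b] {σ τ : Matrix (a × b) (a × b) ℂ} (hσ : IsSep σ) (hτ : IsSep τ)
    {s t : ℝ} (hs : 0 ≤ s) (ht : 0 ≤ t) (hst : s + t = 1) :
    IsSep ((s : ℂ) • σ + (t : ℂ) • τ) := by
  obtain ⟨m, p, A, B, hp, hp_sum, hA, hB, rfl⟩ := hσ
  obtain ⟨m', p', A', B', hp', hp'_sum, hA', hB', rfl⟩ := hτ
  refine ⟨m + m', Fin.append (fun i => s * p i) (fun i => t * p' i),
    Fin.append A A', Fin.append B B', ?_, ?_, ?_, ?_, ?_⟩ <;>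
    simp only [Fin.forall_fin_add, Fin.sum_univ_add, Fin.append_left, Fin.append_right]
  · exact ⟨fun i => mul_nonneg hs (hp i), fun i => mul_nonneg ht (hp' i)⟩
  · rw [← Finset.mul_sum, ← Finset.mul_sum, hp_sum, hp'_sum, mul_one, mul_one, hst]
  · exact ⟨hA, hA'⟩
  · exact ⟨hB, hB'⟩
  · simp only [Finset.smul_sum, smul_smul, Complex.ofReal_mul]

section Loewner

variable {n : Type*} [Fintype n]

theorem loe_smul_add_smul {A B C D : Matrix n n ℂ} (hAC : loe A C) (hBD : loe B D)
    {s t : ℝ} (hs : 0 ≤ s) (ht : 0 ≤ t) :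
    loe ((s : ℂ) • A + (t : ℂ) • B) ((s : ℂ) • C + (t : ℂ) • D) := by
  have hsub : (s : ℂ) • C + (t : ℂ) • D - ((s : ℂ) • A + (t : ℂ) • B) =
      (s : ℂ) • (C - A) + (t : ℂ) • (D - B) := by
    module
  unfold loe
  rw [hsub]
  exact (hAC.smul (Complex.zero_le_real.mpr hs)).add (hBD.smul (Complex.zero_le_real.mpr ht))

theorem loe_add_right (A : Matrix n n ℂ) {P : Matrix n n ℂ} (hP : P.PosSemidef) :
    loe A (A + P) := by
  rwa [loe, add_sub_cancel_left]

end Loewner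

theorem stmt15_general {a b : Type*} [Fintype a] [DecidableEq a] [Fintype b] [DecidableEq b]
    (d : ℕ) (hd : 1 ≤ d) (δ : ℝ)
    (rt om σ₁ σ₂ : Matrix (a × b) (a × b) ℂ)
    (hrt : IsState rt) (hom : IsState om)
    (hσ₁ : IsSep σ₁) (hσ₂ : IsSep σ₂)
    (h1 : loe om (((1 + δ : ℝ) : ℂ) • σ₁))
    (h2 : loe ((((1 : ℝ) / d : ℝ) : ℂ) • rt + ((((d : ℝ) - 1) / d : ℝ) : ℂ) • om)
      (((1 + δ : ℝ) : ℂ) • σ₂)) :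
    ∃ σ₁' σ₂' : Matrix (a × b) (a × b) ℂ, IsSep σ₁' ∧ IsSep σ₂' ∧
      loe ((((1 : ℝ) / (2 * d) : ℝ) : ℂ) • rt +
            (((2 * (d : ℝ) - 1) / (2 * d) : ℝ) : ℂ) • om)
          (((1 + δ : ℝ) : ℂ) • σ₁') ∧
      loe ((((1 : ℝ) / (2 * d) : ℝ) : ℂ) • rt +
            (((2 * (d : ℝ) - 1) / (2 * d) : ℝ) : ℂ) •
              ((((1 : ℝ) / (2 * d) : ℝ) : ℂ) • rt +
               (((2 * (d : ℝ) - 1) / (2 * d) : ℝ) : ℂ) • om))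
          (((1 + δ : ℝ) : ℂ) • σ₂') ∧
      loe rt (((2 * (d : ℝ) + 1 : ℝ) : ℂ) •
          ((((1 : ℝ) / (2 * d) : ℝ) : ℂ) • rt +
           (((2 * (d : ℝ) - 1) / (2 * d) : ℝ) : ℂ) • om)) := by
  have hd_one : (1 : ℝ) ≤ d := by exact_mod_cast hd
  have hd_pos : (0 : ℝ) < d := by linarith
  have hweight : 1 / (4 * (d : ℝ)) ≤ 1 := by
    rw [div_le_one (by positivity)]
    linarith
  refine ⟨_, _, hσ₂.smul_add_smul hσ₁ (s := 1 / 2) (t := 1 / 2) (by norm_num) (by norm_num)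
      (by norm_num), hσ₂.smul_add_smul hσ₁ (s := 1 - 1 / (4 * d)) (t := 1 / (4 * d))
      (by linarith) (by positivity) (by ring), ?_, ?_, ?_⟩
  · convert loe_smul_add_smul h2 h1 (s := 1 / 2) (t := 1 / 2) (by norm_num) (by norm_num)
      using 1 <;> match_scalars <;> field_simp
    all_goals ring
  · convert loe_smul_add_smul h2 h1 (s := 1 - 1 / (4 * d)) (t := 1 / (4 * d)) (by linarith)
      (by positivity) using 1 <;> match_scalars <;> field_simp
    all_goals ring
  · have hsurplus : (((1 / (2 * d) : ℝ) : ℂ) • rt +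
        (((4 * d ^ 2 - 1) / (2 * d) : ℝ) : ℂ) • om).PosSemidef :=
      (hrt.1.smul (Complex.zero_le_real.mpr (by positivity))).add
        (hom.1.smul (Complex.zero_le_real.mpr (div_nonneg (by nlinarith) (by positivity))))
    convert loe_add_right rt hsurplus using 1
    match_scalars <;> field_simp
    all_goals ring

theorem stmt15 {a b : Type*} [Fintype a] [DecidableEq a] [Fintype b] [DecidableEq b]
    (d : ℕ) (hd : 1 ≤ d) (δ : ℝ) (hδ : 0 ≤ δ)
    (rt om σ₁ σ₂ : Matrix (a × b) (a × b) ℂ)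
    (hrt : IsState rt) (hom : IsState om)
    (hσ₁ : IsSep σ₁) (hσ₂ : IsSep σ₂)
    (h1 : loe om (((1 + δ : ℝ) : ℂ) • σ₁))
    (h2 : loe ((((1 : ℝ) / d : ℝ) : ℂ) • rt + ((((d : ℝ) - 1) / d : ℝ) : ℂ) • om)
      (((1 + δ : ℝ) : ℂ) • σ₂)) :
    ∃ σ₁' σ₂' : Matrix (a × b) (a × b) ℂ, IsSep σ₁' ∧ IsSep σ₂' ∧
      loe ((((1 : ℝ) / (2 * d) : ℝ) : ℂ) • rt +
            (((2 * (d : ℝ) - 1) / (2 * d) : ℝ) : ℂ) • om)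
          (((1 + δ : ℝ) : ℂ) • σ₁') ∧
      loe ((((1 : ℝ) / (2 * d) : ℝ) : ℂ) • rt +
            (((2 * (d : ℝ) - 1) / (2 * d) : ℝ) : ℂ) •
              ((((1 : ℝ) / (2 * d) : ℝ) : ℂ) • rt +
               (((2 * (d : ℝ) - 1) / (2 * d) : ℝ) : ℂ) • om))
          (((1 + δ : ℝ) : ℂ) • σ₂') ∧
      loe rt (((2 * (d : ℝ) + 1 : ℝ) : ℂ) •
          ((((1 : ℝ) / (2 * d) : ℝ) : ℂ) • rt +
           (((2 * (d : ℝ) - 1) / (2 * d) : ℝ) : ℂ) • om)) :=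
  stmt15_general d hd δ rt om σ₁ σ₂ hrt hom hσ₁ hσ₂ h1 h2

end
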